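/- In any G₄⁰-algebra, ∼x ⊳ x = ∼x ≻ x, where x ⊳ y = x ≻ (x ≻ y) and ∼x = x ≻ 0. -/

import Mathlib

class GAlgebra (A : Type*) where
  succ : A → A → A
  one : A
  g1 : ∀ x, succ one x = x
  g2 : ∀ x, succ x one = one
  g3 : ∀ x y, succ (succ x y) y = succ (succ y x) x
  g4 : ∀ x y z, succ x (succ y z) = one → succ y (succ x z) = one

open GAlgebra

local infixr:70 " ≻ " => GAlgebra.succ

class G0Algebra (A : Type*) extends GAlgebra A where
  zero : A
  g17 : ∀ x, succ zero x = one

open G0Algebra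

class G40Algebra (A : Type*) extends G0Algebra A where
  g28 : ∀ x y, succ (succ (succ x (succ x y)) x) x = one

open G40Algebra


/-!
Write `a ≤ b` for `a ≻ b = 1`. Axiom `g3` makes `≤` antisymmetric and `∼` an involution.
The G₄ axiom, after one application of `g3`, says `x ≻ (x ⊳ y) ≤ x ⊳ y`; the reverse inequality
holds in every G-algebra, so `x ≻ (x ⊳ y) = x ⊳ y`. Taking `y = 0` and replacing `x` by `∼x`
turns `∼x ≻ (∼x ⊳ 0)` into `∼x ⊳ x` and `∼x ⊳ 0` into `∼x ≻ x`.
-/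

namespace GAlgebra

variable {A : Type*} [GAlgebra A]

theorem succ_self (a : A) : a ≻ a = one := by
  simpa only [g1, g2] using (g3 a one).symm

theorem succ_succ_eq_one (a b : A) : a ≻ (b ≻ a) = one :=
  g4 b a a (by rw [succ_self, g2])

theorem eq_of_succ_eq_one_of_succ_eq_one {a b : A} (hab : a ≻ b = one) (hba : b ≻ a = one) :
    a = b :=
  calc a = (b ≻ a) ≻ a := by rw [hba, g1]
    _ = (a ≻ b) ≻ b := g3 b a
    _ = b := by rw [hab, g1]

end GAlgebra

theorem G0Algebra.succ_zero_succ_zero {A : Type*} [G0Algebra A] (x : A) :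
    (x ≻ zero) ≻ zero = x := by
  rw [g3, g17, g1]

theorem G40Algebra.succ_succ_succ {A : Type*} [G40Algebra A] (x y : A) :
    x ≻ (x ≻ (x ≻ y)) = x ≻ (x ≻ y) :=
  eq_of_succ_eq_one_of_succ_eq_one (by rw [g3]; exact g28 x y) (succ_succ_eq_one _ x)

theorem stmt17 {A : Type*} [G40Algebra A] (x : A) :
    (x ≻ (zero : A)) ≻ ((x ≻ (zero : A)) ≻ x) = (x ≻ (zero : A)) ≻ x := by
  simpa only [succ_zero_succ_zero] using succ_succ_succ (x ≻ (zero : A)) zero
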